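/- For every finite group G and subgroup H ≤ G, there exists a common system of representatives for the left cosets and the right cosets of H in G, i.e. elements φ₁,...,φ_m with m = [G:H] such that {φ_l H} are all the left cosets and {H φ_l} are all the right cosets. -/

import Mathlib

/-!
Every left coset and every right coset of `H` has `|H|` elements. Joining a left coset to each
right coset it meets, the union of any `n` left cosets is covered by the right cosets adjacent to
them, so there are at least `n` of those: this is Hall's condition. Hall's marriage theorem then
matches the left cosets bijectively with right cosets they meet, and a point of each intersection
is a common representative.
-/

open Finset Function

theorem card_filter_mem_eq_mul_of_card_fiber_eq {X Y : Type*} [Fintype X] [DecidableEq Y]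
    {f : X → Y} {k : ℕ} (hf : ∀ y, #{x | f x = y} = k) (T : Finset Y) :
    #{x | f x ∈ T} = #T * k := by
  rw [← sum_card_fiberwise_eq_card_filter, sum_const_nat fun y _ => hf y]

theorem exists_section_bijective_of_card_fiber_eq {X A B : Type*} [Fintype X] [Fintype A]
    [Fintype B] [DecidableEq A] [DecidableEq B] {p : X → A} {q : X → B} {k : ℕ} (hk : 0 < k)
    (hp : ∀ a, #{x | p x = a} = k) (hq : ∀ b, #{x | q x = b} = k) :
    ∃ s : A → X, (∀ a, p (s a) = a) ∧ Bijective (q ∘ s) := by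
  have hall (S : Finset A) : #S ≤ #{b | ∃ a ∈ S, ∃ x, p x = a ∧ q x = b} := by
    refine Nat.le_of_mul_le_mul_right ?_ hk
    rw [← card_filter_mem_eq_mul_of_card_fiber_eq hp, ← card_filter_mem_eq_mul_of_card_fiber_eq hq]
    refine card_le_card fun x hx => ?_
    simp only [mem_filter, mem_univ, true_and] at hx ⊢
    exact ⟨p x, hx, x, rfl, rfl⟩
  obtain ⟨f, hf_inj, hf⟩ := (Fintype.all_card_le_filter_rel_iff_exists_injective _).mp hall
  choose s hsp hsq using hf
  have hcard : Fintype.card A = Fintype.card B := by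
    have hA := card_filter_mem_eq_mul_of_card_fiber_eq hp univ
    have hB := card_filter_mem_eq_mul_of_card_fiber_eq hq univ
    simp only [mem_univ, filter_true, card_univ] at hA hB
    exact Nat.eq_of_mul_eq_mul_right hk (hA.symm.trans hB)
  refine ⟨s, hsp, ?_⟩
  rw [show q ∘ s = f from funext hsq]
  exact (Fintype.bijective_iff_injective_and_card f).mpr ⟨hf_inj, hcard⟩

namespace QuotientGroup

open scoped Pointwise
open MulOpposite

variable {G : Type*} [Group G] (H : Subgroup G)

theorem eq_class_eq_rightCoset (g : G) :
    {x : G | Quotient.mk (rightRel H) x = Quotient.mk _ g} = op g • (H : Set G) := by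
  ext x
  rw [Set.mem_ofPred_eq, mem_rightCoset_iff, Quotient.eq, rightRel_apply, SetLike.mem_coe,
    ← H.inv_mem_iff, mul_inv_rev, inv_inv]

variable [Fintype G]

theorem card_filter_mk_eq [DecidableEq (G ⧸ H)] (a : G ⧸ H) :
    #{x : G | (x : G ⧸ H) = a} = Nat.card H := by
  induction a using QuotientGroup.induction_on with | H g => ?_
  rw [← Set.ncard_coe_finset, coe_filter_univ, eq_class_eq_leftCoset, Set.ncard_smul_set]
  rfl

theorem card_filter_mk_rightRel_eq [DecidableEq (Quotient (rightRel H))]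
    (a : Quotient (rightRel H)) : #{x : G | Quotient.mk _ x = a} = Nat.card H := by
  induction a using Quotient.inductionOn with | h g => ?_
  rw [← Set.ncard_coe_finset, coe_filter_univ, eq_class_eq_rightCoset, Set.ncard_smul_set]
  rfl

end QuotientGroup

/-- P. Hall's theorem: every subgroup `H` of a finite group `G` admits a common system
of representatives for the left cosets and the right cosets of `H` in `G`. -/
theorem exists_common_left_right_transversal
    {G : Type*} [Group G] [Fintype G] (H : Subgroup G) :
    ∃ φ : Fin H.index → G,
      Function.Bijective (fun l => (QuotientGroup.mk (φ l) : G ⧸ H)) ∧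
      Function.Bijective (fun l =>
        (Quotient.mk (QuotientGroup.rightRel H) (φ l))) := by
  classical
  obtain ⟨s, hs_left, hs_right⟩ := exists_section_bijective_of_card_fiber_eq Nat.card_pos
    (QuotientGroup.card_filter_mk_eq H) (QuotientGroup.card_filter_mk_rightRel_eq H)
  let e : Fin H.index ≃ G ⧸ H := (Finite.equivFin (G ⧸ H)).symm
  refine ⟨s ∘ e, ?_, hs_right.comp e.bijective⟩
  simpa only [comp_apply, hs_left] using e.bijective
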